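/- Let n be a positive integer, let x, y_1, …, y_n be vectors in H, let c_1, …, c_n be complex numbers, and let p > 1 and q satisfy 1/p + 1/q = 1. Then |∑_{i=1}^n c_i (x, y_i)|^2 ≤ ‖x‖^2 · max_{1≤i≤n} |c_i| · (∑_{i=1}^n |c_i|^q)^{1/q} · (∑_{i=1}^n ∑_{j=1}^n |(y_i, y_j)|)^{1/p} · (max_{1≤i≤n} ∑_{j=1}^n |(y_i, y_j)|)^{1/q}. -/

import Mathlib

/-! With `z = ∑ cᵢ yᵢ` the left side is `|(x, z)|² ≤ ‖x‖² ‖z‖²`. Expanding `‖z‖²` and bounding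
each `|cⱼ|` by `max |c|` gives `‖z‖² ≤ max |c| · ∑ᵢ |cᵢ| Sᵢ` with `Sᵢ = ∑ⱼ |(yᵢ, yⱼ)|`. Hölder bounds
the last sum by `‖c‖_q ‖S‖_p`, and `‖S‖_p ≤ (∑ Sᵢ)^{1/p} (max S)^{1/q}` because
`Sᵢ^p ≤ (max S)^{p-1} Sᵢ` and `(p - 1)/p = 1/q`. -/

open Finset
open scoped InnerProductSpace

section Gram

variable {𝕜 E ι : Type*} [RCLike 𝕜] [NormedAddCommGroup E] [InnerProductSpace 𝕜 E] [Fintype ι]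

theorem norm_inner_sum_smul_le_mul_sum (c : ι → 𝕜) (y : ι → E) (u : E) {M : ℝ}
    (hM : ∀ j, ‖c j‖ ≤ M) :
    ‖⟪u, ∑ j, c j • y j⟫_𝕜‖ ≤ M * ∑ j, ‖⟪u, y j⟫_𝕜‖ := by
  rw [inner_sum, mul_sum]
  refine (norm_sum_le _ _).trans (sum_le_sum fun j _ => ?_)
  rw [inner_smul_right, norm_mul]
  exact mul_le_mul_of_nonneg_right (hM j) (norm_nonneg _)

theorem norm_sum_smul_sq_le (c : ι → 𝕜) (y : ι → E) {M : ℝ} (hM : ∀ j, ‖c j‖ ≤ M) :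
    ‖∑ i, c i • y i‖ ^ 2 ≤ M * ∑ i, ‖c i‖ * ∑ j, ‖⟪y i, y j⟫_𝕜‖ := by
  set z := ∑ i, c i • y i with hz
  calc ‖z‖ ^ 2 = RCLike.re ⟪z, z⟫_𝕜 := (inner_self_eq_norm_sq z).symm
    _ ≤ ‖⟪z, z⟫_𝕜‖ := RCLike.re_le_norm _
    _ ≤ ∑ i, ‖c i‖ * ‖⟪y i, z⟫_𝕜‖ := by
      nth_rw 1 [hz]
      rw [sum_inner]
      refine (norm_sum_le _ _).trans_eq (sum_congr rfl fun i _ => ?_)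
      rw [inner_smul_left, norm_mul, RCLike.norm_conj]
    _ ≤ ∑ i, ‖c i‖ * (M * ∑ j, ‖⟪y i, y j⟫_𝕜‖) := by
      gcongr with i
      exact norm_inner_sum_smul_le_mul_sum c y (y i) hM
    _ = M * ∑ i, ‖c i‖ * ∑ j, ‖⟪y i, y j⟫_𝕜‖ := by
      rw [mul_sum]
      exact sum_congr rfl fun i _ => mul_left_comm _ _ _

end Gram

theorem Real.sum_rpow_le_rpow_sub_one_mul_sum {ι : Type*} (s : Finset ι) {a : ι → ℝ} {A p : ℝ}
    (ha : ∀ i ∈ s, 0 ≤ a i) (hA : ∀ i ∈ s, a i ≤ A) (hp : 1 ≤ p) :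
    ∑ i ∈ s, a i ^ p ≤ A ^ (p - 1) * ∑ i ∈ s, a i := by
  rw [mul_sum]
  refine sum_le_sum fun i hi => ?_
  calc a i ^ p = a i ^ (p - 1) * a i := by
        rw [← Real.rpow_add_one' (ha i hi) (by linarith), sub_add_cancel]
    _ ≤ A ^ (p - 1) * a i :=
        mul_le_mul_of_nonneg_right
          (Real.rpow_le_rpow (ha i hi) (hA i hi) (by linarith)) (ha i hi)

theorem Real.Lp_le_rpow_sum_mul_rpow_of_le {ι : Type*} (s : Finset ι) {a : ι → ℝ} {A p q : ℝ}
    (hpq : p.HolderConjugate q) (ha : ∀ i ∈ s, 0 ≤ a i) (hA₀ : 0 ≤ A) (hA : ∀ i ∈ s, a i ≤ A) :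
    (∑ i ∈ s, a i ^ p) ^ (1 / p) ≤ (∑ i ∈ s, a i) ^ (1 / p) * A ^ (1 / q) := by
  have hsum : 0 ≤ ∑ i ∈ s, a i := sum_nonneg ha
  have hexp : (p - 1) * (1 / p) = 1 / q := by
    rw [sub_mul, mul_one_div_cancel hpq.ne_zero, one_mul, one_div, one_div, hpq.one_sub_inv]
  calc (∑ i ∈ s, a i ^ p) ^ (1 / p) ≤ (A ^ (p - 1) * ∑ i ∈ s, a i) ^ (1 / p) :=
        Real.rpow_le_rpow (sum_nonneg fun i hi => Real.rpow_nonneg (ha i hi) p)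
          (sum_rpow_le_rpow_sub_one_mul_sum s ha hA hpq.lt.le) hpq.one_div_nonneg
    _ = (∑ i ∈ s, a i) ^ (1 / p) * A ^ (1 / q) := by
        rw [Real.mul_rpow (Real.rpow_nonneg hA₀ _) hsum, ← Real.rpow_mul hA₀, hexp, mul_comm]

theorem stmt_15 {H : Type*} [NormedAddCommGroup H] [InnerProductSpace ℂ H]
    {n : ℕ} (hn : 0 < n) (x : H) (y : Fin n → H) (c : Fin n → ℂ) (p q : ℝ) (hp : 1 < p) (hpq : 1 / p + 1 / q = 1) :
    (‖∑ i, c i * (inner ℂ x (y i) : ℂ)‖) ^ 2 ≤ ‖x‖ ^ 2 * (Finset.univ.sup' (Finset.univ_nonempty_iff.mpr (Fin.pos_iff_nonempty.mp hn)) (fun i => ‖c i‖)) * (∑ i, (‖c i‖) ^ q) ^ (1 / q) * (∑ i, ∑ j, ‖(inner ℂ (y i) (y j) : ℂ)‖) ^ (1 / p) * (Finset.univ.sup' (Finset.univ_nonempty_iff.mpr (Fin.pos_iff_nonempty.mp hn)) (fun i => (∑ j, ‖(inner ℂ (y i) (y j) : ℂ)‖))) ^ (1 / q) := by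
  have hpq' : p.HolderConjugate q := Real.holderConjugate_iff.mpr ⟨hp, by simpa only [one_div] using hpq⟩
  set hne := Finset.univ_nonempty_iff.mpr (Fin.pos_iff_nonempty.mp hn)
  set S : Fin n → ℝ := fun i => ∑ j, ‖⟪y i, y j⟫_ℂ‖
  set M := univ.sup' hne fun i => ‖c i‖
  have hS : ∀ i ∈ univ, 0 ≤ S i := fun i _ => sum_nonneg fun j _ => norm_nonneg _
  have hM : 0 ≤ M := le_sup'_of_le _ (mem_univ ⟨0, hn⟩) (norm_nonneg _)
  have hMS : 0 ≤ univ.sup' hne S := le_sup'_of_le _ (mem_univ ⟨0, hn⟩) (hS _ (mem_univ _))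
  have hinner : ∑ i, c i * ⟪x, y i⟫_ℂ = ⟪x, ∑ i, c i • y i⟫_ℂ := by
    simp only [inner_sum, inner_smul_right]
  have holder : ∑ i, ‖c i‖ * S i ≤ (∑ i, ‖c i‖ ^ q) ^ (1 / q) * (∑ i, S i ^ p) ^ (1 / p) :=
    Real.inner_le_Lp_mul_Lq_of_nonneg univ hpq'.symm (fun i _ => norm_nonneg _) hS
  calc ‖∑ i, c i * ⟪x, y i⟫_ℂ‖ ^ 2 ≤ (‖x‖ * ‖∑ i, c i • y i‖) ^ 2 := by
        rw [hinner]; gcongr; exact norm_inner_le_norm _ _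
    _ ≤ ‖x‖ ^ 2 * (M * ∑ i, ‖c i‖ * S i) := by
        rw [mul_pow]; gcongr
        exact norm_sum_smul_sq_le c y fun j => le_sup' (fun i => ‖c i‖) (mem_univ j)
    _ ≤ ‖x‖ ^ 2 * (M * ((∑ i, ‖c i‖ ^ q) ^ (1 / q) *
          ((∑ i, S i) ^ (1 / p) * univ.sup' hne S ^ (1 / q)))) := by
        grw [holder,
          Real.Lp_le_rpow_sum_mul_rpow_of_le univ hpq' hS hMS fun i _ => le_sup' S (mem_univ i)]
    _ = _ := by ring
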